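/- Let $(X_n)$ be the minimal random walk with $q = 0$ and $1/2 < p < 1$. Then $X_n / a_n - s$ converges almost surely and in $L^m$ for every $m \geq 1$ to a random variable $M$ with $\mathbb{E}[M] = 0$, where $a_n = \Gamma(n+p)/(\Gamma(n)\Gamma(1+p))$. -/

import Mathlib

open MeasureTheory ProbabilityTheory Filter Real BoundedContinuousFunction

noncomputable section

/-- The minimal random walk of Kumar–Harbola–Lindenberg: increments `η n ∈ {0,1}`,
`P(η 1 = 1) = s`, and for `n ≥ 1` the conditional expectation (i.e. conditional
probability of a forward step) given `σ(η 1, …, η n)` is `q + (p-q) X_n / n`,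
where `X_n = ∑_{k=1}^n η k`. -/
structure IsMinimalRW {Ω : Type*} [MeasurableSpace Ω] (μ : Measure Ω)
    (p q s : ℝ) (η : ℕ → Ω → ℝ) : Prop where
  meas : ∀ n, Measurable (η n)
  zero : ∀ ω, η 0 ω = 0
  vals : ∀ n, 1 ≤ n → ∀ᵐ ω ∂μ, η n ω = 0 ∨ η n ω = 1
  init : (μ {ω | η 1 ω = 1}).toReal = s
  cond : ∀ n : ℕ, 1 ≤ n →
      μ[η (n + 1) | ⨆ i ∈ Finset.Icc 1 n, MeasurableSpace.comap (η i) inferInstance]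
        =ᵐ[μ] fun ω => q + (p - q) * (∑ k ∈ Finset.Icc 1 n, η k ω) / n

/-- The position of the walk, `X_n = ∑_{k=1}^n η_k`. -/
def walkPos {Ω : Type*} (η : ℕ → Ω → ℝ) (n : ℕ) (ω : Ω) : ℝ := ∑ k ∈ Finset.Icc 1 n, η k ω

/-- The normalizing sequence `a_n = Γ(n+α)/(Γ(n)Γ(1+α))`. -/
def aSeq (α : ℝ) (n : ℕ) : ℝ := Real.Gamma (n + α) / (Real.Gamma n * Real.Gamma (1 + α))


/-! Writing `a_n^{(α)}` for `aSeq α n`, the identities `E[X_{n+1} | F_n] = (1 + p/n) X_n` and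
`a_{n+1}^{(p)} = (1 + p/n) a_n^{(p)}` make `X_{n+1} / a_{n+1}^{(p)} - s` a martingale.
Its moments are controlled through rising factorials: conditioning gives
`E[X_n (X_n + 1) ⋯ (X_n + r - 1)] = r! s a_n^{(rp)}`, and Bernoulli's inequality gives
`a_n^{(rp)} ≤ (a_n^{(p)})^r`, so `E[(X_n / a_n^{(p)})^r] ≤ r! s` for every `r`.
A martingale bounded in every `L^r` converges almost surely (Doob); bounded in `L^{2m}`,
it is uniformly integrable in `L^m`, so the convergence also holds in `L^m` (Vitali),
and the limit keeps the mean `0` of the martingale. -/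

open Topology
open scoped ENNReal NNReal Nat

section GammaRatio

variable {α : ℝ}

lemma aSeq_one (hα : 0 ≤ α) : aSeq α 1 = 1 := by
  have : Real.Gamma (1 + α) ≠ 0 := (Real.Gamma_pos_of_pos (by linarith)).ne'
  simpa [aSeq, add_comm] using this

lemma aSeq_pos (hα : 0 ≤ α) {n : ℕ} (hn : n ≠ 0) : 0 < aSeq α n := by
  have hn : (0 : ℝ) < n := by positivity
  unfold aSeq
  have := Real.Gamma_pos_of_pos hn
  have := Real.Gamma_pos_of_pos (show 0 < (n : ℝ) + α by linarith)
  have := Real.Gamma_pos_of_pos (show 0 < 1 + α by linarith)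
  positivity

lemma aSeq_succ (hα : 0 ≤ α) {n : ℕ} (hn : n ≠ 0) :
    aSeq α (n + 1) = (1 + α / n) * aSeq α n := by
  have hn : (0 : ℝ) < n := by positivity
  have hΓn := (Real.Gamma_pos_of_pos hn).ne'
  have hΓα := (Real.Gamma_pos_of_pos (show 0 < 1 + α by linarith)).ne'
  simp only [aSeq, Nat.cast_add, Nat.cast_one, add_right_comm _ (1 : ℝ),
    Real.Gamma_add_one hn.ne', Real.Gamma_add_one (show (n : ℝ) + α ≠ 0 by linarith)]
  field_simp

/-- Bernoulli's inequality `1 + r α / n ≤ (1 + α / n) ^ r`, one factor at a time. -/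
lemma aSeq_mul_le_pow (hα : 0 ≤ α) (r : ℕ) {n : ℕ} (hn : n ≠ 0) :
    aSeq (r * α) n ≤ aSeq α n ^ r := by
  have hrα : 0 ≤ r * α := by positivity
  induction n, Nat.one_le_iff_ne_zero.mpr hn using Nat.le_induction with
  | base => simp [aSeq_one hα, aSeq_one hrα]
  | succ n hn ih =>
    have hn0 : n ≠ 0 := by omega
    rw [aSeq_succ hα hn0, aSeq_succ hrα hn0, mul_pow]
    have hbern : 1 + r * α / n ≤ (1 + α / n) ^ r := by
      simpa [mul_div_assoc] using one_add_mul_le_pow (a := α / n) (by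
        have : 0 ≤ α / n := by positivity
        linarith) r
    exact mul_le_mul hbern (ih hn0) (aSeq_pos hrα hn0).le (by positivity)

end GammaRatio

section Pochhammer

variable {S : Type*}

lemma ascPochhammer_succ_eval_eq_mul [CommSemiring S] (n : ℕ) (x : S) :
    (ascPochhammer S (n + 1)).eval x = x * (ascPochhammer S n).eval (x + 1) := by
  simp [ascPochhammer_succ_left, Polynomial.eval_comp]

lemma ascPochhammer_succ_eval_add_one [CommSemiring S] (n : ℕ) (x : S) :
    (ascPochhammer S (n + 1)).eval (x + 1) =
      (ascPochhammer S (n + 1)).eval x + (n + 1) * (ascPochhammer S n).eval (x + 1) := by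
  simpa [Polynomial.eval_comp] using
    congr_arg (Polynomial.eval x) (ascPochhammer_succ_comp_X_add_one (S := S) n)

variable [Semiring S] [PartialOrder S] [IsOrderedRing S]

lemma ascPochhammer_eval_nonneg (n : ℕ) {x : S} (hx : 0 ≤ x) :
    0 ≤ (ascPochhammer S n).eval x := by
  induction n with
  | zero => simp
  | succ n ih => rw [ascPochhammer_succ_eval]; positivity

lemma pow_le_ascPochhammer_eval (n : ℕ) {x : S} (hx : 0 ≤ x) :
    x ^ n ≤ (ascPochhammer S n).eval x := by
  induction n with
  | zero => simp
  | succ n ih =>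
    rw [ascPochhammer_succ_eval, pow_succ]
    exact mul_le_mul ih (le_add_of_nonneg_right n.cast_nonneg) hx
      (ascPochhammer_eval_nonneg n hx)

end Pochhammer

section UniformIntegrability

variable {ι α β : Type*} [NormedAddCommGroup β] {m : MeasurableSpace α} {μ : Measure α}
  {p : ℝ≥0∞}

/-- On `{c ≤ ‖f‖}` one has `‖f‖ ≤ ‖f‖ ^ 2 / c`, so the `L^p` norm of the tail is at most
`‖f‖_{2p} ^ 2 / c`. -/
lemma unifIntegrable_of_eLpNorm_two_mul_le (hp : 1 ≤ p) (hp' : p ≠ ∞) {f : ι → α → β}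
    {C : ℝ≥0} (hf : ∀ i, AEStronglyMeasurable (f i) μ) (hC : ∀ i, eLpNorm (f i) (2 * p) μ ≤ C) :
    UnifIntegrable f p μ := by
  refine unifIntegrable_of hp hp' hf fun ε hε => ?_
  set c : ℝ := C ^ 2 / ε + 1 with hc_def
  have hc : 0 < c := by positivity
  refine ⟨c.toNNReal, fun i => ?_⟩
  have htail : ∀ x, ‖{x | c.toNNReal ≤ ‖f i x‖₊}.indicator (f i) x‖ ≤
      c⁻¹ * ‖f i x‖ ^ (2 : ℝ) := by
    intro x
    by_cases hx : x ∈ {x | c.toNNReal ≤ ‖f i x‖₊}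
    · have hcx : c ≤ ‖f i x‖ := by simpa [Real.toNNReal_le_iff_le_coe] using hx
      rw [Set.indicator_of_mem hx, Real.rpow_two, le_inv_mul_iff₀ hc, sq]
      exact mul_le_mul_of_nonneg_right hcx (norm_nonneg _)
    · rw [Set.indicator_of_notMem hx, norm_zero]
      positivity
  have hpow : eLpNorm (fun x => ‖f i x‖ ^ (2 : ℝ)) p μ = eLpNorm (f i) (2 * p) μ ^ (2 : ℝ) := by
    rw [eLpNorm_norm_rpow _ two_pos, ENNReal.ofReal_ofNat, mul_comm]
  calc eLpNorm ({x | c.toNNReal ≤ ‖f i x‖₊}.indicator (f i)) p μ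
      ≤ eLpNorm (c⁻¹ • fun x => ‖f i x‖ ^ (2 : ℝ)) p μ :=
        eLpNorm_mono_ae_real (ae_of_all _ htail)
    _ = ENNReal.ofReal c⁻¹ * eLpNorm (f i) (2 * p) μ ^ (2 : ℝ) := by
        rw [eLpNorm_const_smul, hpow, Real.enorm_of_nonneg (by positivity)]
    _ ≤ ENNReal.ofReal c⁻¹ * (C : ℝ≥0∞) ^ (2 : ℝ) := by gcongr; exact hC i
    _ = ENNReal.ofReal (c⁻¹ * C ^ 2) := by
        rw [ENNReal.ofReal_mul (by positivity), ENNReal.rpow_two, ← ENNReal.ofReal_coe_nnreal,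
          ← ENNReal.ofReal_pow (by positivity)]
    _ ≤ ENNReal.ofReal ε := by
        refine ENNReal.ofReal_le_ofReal ?_
        rw [inv_mul_le_iff₀ hc, hc_def, div_add_one hε.ne', div_mul_cancel₀ _ hε.ne']
        linarith

lemma tendsto_integral_norm_rpow_of_tendsto_eLpNorm {κ : Type*} {l : Filter κ}
    {f : κ → α → β} (hp0 : p ≠ 0) (hp : p ≠ ∞) (hf : ∀ i, AEStronglyMeasurable (f i) μ)
    (h : Tendsto (fun i => eLpNorm (f i) p μ) l (𝓝 0)) :
    Tendsto (fun i => ∫ x, ‖f i x‖ ^ p.toReal ∂μ) l (𝓝 0) := by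
  have hp0' : p.toReal ≠ 0 := ENNReal.toReal_ne_zero.mpr ⟨hp0, hp⟩
  have hint : ∀ i, ∫ x, ‖f i x‖ ^ p.toReal ∂μ = (eLpNorm (f i) p μ).toReal ^ p.toReal := by
    intro i
    rw [toReal_eLpNorm (hf i), lpNorm_eq_integral_norm_rpow_toReal hp0 hp (hf i),
      Real.rpow_inv_rpow (integral_nonneg fun x => by positivity) hp0']
  simp_rw [hint]
  simpa [Real.zero_rpow hp0'] using
    ((ENNReal.tendsto_toReal ENNReal.zero_ne_top).comp h).rpow_const (p := p.toReal)
      (Or.inr ENNReal.toReal_nonneg)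

end UniformIntegrability

lemma MeasureTheory.Submartingale.tendsto_eLpNorm_sub_limitProcess {Ω : Type*}
    {m0 : MeasurableSpace Ω} {μ : Measure Ω} [IsProbabilityMeasure μ] {ℱ : Filtration ℕ m0}
    {f : ℕ → Ω → ℝ} (hf : Submartingale f ℱ μ) {p : ℝ≥0∞} (hp : 1 ≤ p) (hp' : p ≠ ∞)
    {R : ℝ≥0} (hbdd : ∀ n, eLpNorm (f n) (2 * p) μ ≤ R) :
    Tendsto (fun n => eLpNorm (f n - ℱ.limitProcess f μ) p μ) atTop (𝓝 0) := by
  have hmeas : ∀ n, AEStronglyMeasurable (f n) μ := fun n =>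
    ((hf.stronglyMeasurable n).mono (ℱ.le n)).aestronglyMeasurable
  have hp2 : p ≤ 2 * p := le_mul_of_one_le_left zero_le one_le_two
  have hbdd' : ∀ {q}, q ≤ 2 * p → ∀ n, eLpNorm (f n) q μ ≤ R := fun hq n =>
    (eLpNorm_le_eLpNorm_of_exponent_le hq (hmeas n)).trans (hbdd n)
  exact tendsto_Lp_finite_of_tendsto_ae hp hp' hmeas (hf.memLp_limitProcess (hbdd' hp2))
    (unifIntegrable_of_eLpNorm_two_mul_le hp hp' hmeas hbdd)
    (hf.ae_tendsto_limitProcess (hbdd' (hp.trans hp2)))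

section Walk

variable {Ω : Type*} {m0 : MeasurableSpace Ω} {μ : Measure Ω} {p q s : ℝ} {η : ℕ → Ω → ℝ}

/-- `walkFiltration η hη n = σ(η 1, …, η (n + 1))`: shifted by one, so that the conditioning
in `IsMinimalRW.cond` at time `n + 1` is on `walkFiltration η hη n`. -/
def walkFiltration (η : ℕ → Ω → ℝ) (hη : ∀ n, Measurable (η n)) : Filtration ℕ m0 where
  seq n := ⨆ i ∈ Finset.Icc 1 (n + 1), MeasurableSpace.comap (η i) inferInstance
  mono' _ _ hij := biSup_mono fun _ hk => Finset.Icc_subset_Icc le_rfl (by omega) hk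
  le' _ := iSup₂_le fun k _ => (hη k).comap_le

def walkMartingale (p s : ℝ) (η : ℕ → Ω → ℝ) (n : ℕ) (ω : Ω) : ℝ :=
  walkPos η (n + 1) ω / aSeq p (n + 1) - s

lemma walkPos_succ (η : ℕ → Ω → ℝ) (n : ℕ) (ω : Ω) :
    walkPos η (n + 1) ω = walkPos η n ω + η (n + 1) ω :=
  Finset.sum_Icc_succ_top (by omega) _

lemma measurable_walkPos (hη : ∀ n, Measurable (η n)) (n : ℕ) : Measurable (walkPos η n) :=
  Finset.measurable_sum _ fun k _ => hη k

lemma measurable_walkPos_walkFiltration (hη : ∀ n, Measurable (η n)) {k n : ℕ}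
    (hk : k ≤ n + 1) : Measurable[walkFiltration η hη n] (walkPos η k) :=
  Finset.measurable_sum _ fun i hi => Measurable.of_comap_le <|
    le_iSup₂ (f := fun i (_ : i ∈ Finset.Icc 1 (n + 1)) =>
      MeasurableSpace.comap (η i) inferInstance) i
      (Finset.Icc_subset_Icc le_rfl hk hi)

namespace IsMinimalRW

variable (hrw : IsMinimalRW μ p q s η)
include hrw

lemma s_nonneg : 0 ≤ s := hrw.init ▸ ENNReal.toReal_nonneg

lemma ae_eta_mem_Icc : ∀ᵐ ω ∂μ, ∀ k, η k ω ∈ Set.Icc (0 : ℝ) 1 := by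
  refine ae_all_iff.mpr fun k => ?_
  rcases Nat.eq_zero_or_pos k with rfl | hk
  · exact ae_of_all _ fun ω => by simp [hrw.zero ω]
  · filter_upwards [hrw.vals k hk] with ω hω
    rcases hω with h | h <;> simp [h]

lemma ae_walkPos_mem_Icc (n : ℕ) : ∀ᵐ ω ∂μ, walkPos η n ω ∈ Set.Icc (0 : ℝ) n := by
  filter_upwards [hrw.ae_eta_mem_Icc] with ω hω
  constructor
  · exact Finset.sum_nonneg fun k _ => (hω k).1
  · simpa [walkPos] using Finset.sum_le_sum fun k (_ : k ∈ Finset.Icc 1 n) => (hω k).2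

lemma exists_ae_bound_comp_walkPos {g : ℝ → ℝ} (hg : Continuous g) (n : ℕ) :
    ∃ C, ∀ᵐ ω ∂μ, ‖g (walkPos η n ω)‖ ≤ C := by
  obtain ⟨c, hc⟩ := (isCompact_Icc (a := (0 : ℝ)) (b := n)).exists_bound_of_continuousOn
    hg.continuousOn
  exact ⟨c, (hrw.ae_walkPos_mem_Icc n).mono fun ω hω => hc _ hω⟩

lemma memLp_comp_walkPos [IsFiniteMeasure μ] {g : ℝ → ℝ} (hg : Continuous g) (n : ℕ)
    (r : ℝ≥0∞) : MemLp (fun ω => g (walkPos η n ω)) r μ :=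
  let ⟨c, hc⟩ := hrw.exists_ae_bound_comp_walkPos hg n
  .of_bound (hg.measurable.comp (measurable_walkPos hrw.meas n)).aestronglyMeasurable c hc

lemma integrable_comp_walkPos [IsFiniteMeasure μ] {g : ℝ → ℝ} (hg : Continuous g) (n : ℕ) :
    Integrable (fun ω => g (walkPos η n ω)) μ :=
  memLp_one_iff_integrable.mp (hrw.memLp_comp_walkPos hg n 1)

lemma integrable_walkPos [IsFiniteMeasure μ] (n : ℕ) : Integrable (walkPos η n) μ :=
  hrw.integrable_comp_walkPos continuous_id n

lemma integrable_eta [IsFiniteMeasure μ] (k : ℕ) : Integrable (η k) μ :=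
  .of_bound (hrw.meas k).aestronglyMeasurable 1 <| hrw.ae_eta_mem_Icc.mono fun ω hω => by
    simpa [abs_le] using ⟨by linarith [(hω k).1], (hω k).2⟩

lemma integral_eta_one : ∫ ω, η 1 ω ∂μ = s := by
  have hA : MeasurableSet {ω | η 1 ω = 1} := hrw.meas 1 (measurableSet_singleton 1)
  have h : η 1 =ᵐ[μ] {ω | η 1 ω = 1}.indicator 1 := by
    filter_upwards [hrw.vals 1 le_rfl] with ω hω
    rcases hω with h | h <;> simp [Set.indicator, h]
  rw [integral_congr_ae h, integral_indicator_one hA, ← hrw.init, measureReal_def]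

lemma condExp_eta_succ (n : ℕ) :
    μ[η (n + 2) | walkFiltration η hrw.meas n] =ᵐ[μ]
      fun ω => q + (p - q) * walkPos η (n + 1) ω / (n + 1) :=
  (hrw.cond (n + 1) (by omega)).trans (ae_of_all _ fun ω => by simp [walkPos])

lemma integral_eta_succ_mul [IsFiniteMeasure μ] {n : ℕ} {f : Ω → ℝ}
    (hf : StronglyMeasurable[walkFiltration η hrw.meas n] f) {C : ℝ}
    (hC : ∀ᵐ ω ∂μ, ‖f ω‖ ≤ C) :
    ∫ ω, η (n + 2) ω * f ω ∂μ =
      ∫ ω, (q + (p - q) * walkPos η (n + 1) ω / (n + 1)) * f ω ∂μ := by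
  have hle := (walkFiltration η hrw.meas).le n
  calc ∫ ω, η (n + 2) ω * f ω ∂μ = ∫ ω, μ[f * η (n + 2) | walkFiltration η hrw.meas n] ω ∂μ := by
        rw [integral_condExp hle]; simp_rw [Pi.mul_apply, mul_comm]
    _ = ∫ ω, (q + (p - q) * walkPos η (n + 1) ω / (n + 1)) * f ω ∂μ := by
        refine integral_congr_ae ?_
        filter_upwards [condExp_stronglyMeasurable_mul_of_bound hle hf
          (hrw.integrable_eta (n + 2)) C hC, hrw.condExp_eta_succ n] with ω h1 h2
        rw [h1, Pi.mul_apply, h2, mul_comm]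

lemma condExp_walkPos_succ [IsFiniteMeasure μ] (n : ℕ) :
    μ[walkPos η (n + 2) | walkFiltration η hrw.meas n] =ᵐ[μ]
      fun ω => q + (1 + (p - q) / (n + 1)) * walkPos η (n + 1) ω := by
  have hX : walkPos η (n + 2) = walkPos η (n + 1) + η (n + 2) := funext (walkPos_succ η _)
  have hXn : μ[walkPos η (n + 1) | walkFiltration η hrw.meas n] = walkPos η (n + 1) :=
    condExp_of_stronglyMeasurable _
      (measurable_walkPos_walkFiltration hrw.meas le_rfl).stronglyMeasurable
      (hrw.integrable_walkPos _)
  rw [hX]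
  filter_upwards [condExp_add (hrw.integrable_walkPos (n + 1))
    (hrw.integrable_eta (n + 2)) (walkFiltration η hrw.meas n), hrw.condExp_eta_succ n]
    with ω h1 h2
  rw [h1, Pi.add_apply, hXn, h2]
  ring

end IsMinimalRW

namespace IsMinimalRW

variable (hrw : IsMinimalRW μ p 0 s η)
include hrw

/-- Adding a step `η ∈ {0, 1}` raises the rising factorial `X (X + 1) ⋯ (X + r)` by
`η (r + 1) (X + 1) ⋯ (X + r)`, and conditioning turns `η` into `p X / n`: the factorial moments
grow by exactly the factor `1 + (r + 1) p / n`. -/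
lemma integral_ascPochhammer_walkPos_succ [IsFiniteMeasure μ] (r n : ℕ) :
    ∫ ω, (ascPochhammer ℝ (r + 1)).eval (walkPos η (n + 2) ω) ∂μ =
      (1 + (r + 1) * p / (n + 1)) *
        ∫ ω, (ascPochhammer ℝ (r + 1)).eval (walkPos η (n + 1) ω) ∂μ := by
  set P := ascPochhammer ℝ
  set X := walkPos η (n + 1)
  have hstep : (fun ω => (P (r + 1)).eval (walkPos η (n + 2) ω)) =ᵐ[μ]
      fun ω => (P (r + 1)).eval (X ω) + (r + 1) * (η (n + 2) ω * (P r).eval (X ω + 1)) := by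
    filter_upwards [hrw.vals (n + 2) (by omega)] with ω hω
    rw [walkPos_succ η (n + 1)]
    rcases hω with h | h
    · simp [h, X]
    · rw [h, ascPochhammer_succ_eval_add_one]
      ring
  have hP : Continuous fun x => (P r).eval (x + 1) := (P r).continuous.comp (continuous_add_const 1)
  obtain ⟨c, hc⟩ := hrw.exists_ae_bound_comp_walkPos hP (n + 1)
  have hPm : StronglyMeasurable[walkFiltration η hrw.meas n] fun ω => (P r).eval (X ω + 1) :=
    (hP.measurable.comp (measurable_walkPos_walkFiltration hrw.meas le_rfl)).stronglyMeasurable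
  have hηP : Integrable (fun ω => η (n + 2) ω * (P r).eval (X ω + 1)) μ :=
    (hrw.integrable_comp_walkPos hP (n + 1)).bdd_mul (hrw.meas _).aestronglyMeasurable
      (hrw.ae_eta_mem_Icc.mono fun ω hω => by
        simpa [abs_le] using ⟨by linarith [(hω (n + 2)).1], (hω (n + 2)).2⟩)
  have hcond : ∫ ω, (0 + (p - 0) * X ω / (n + 1)) * (P r).eval (X ω + 1) ∂μ =
      p / (n + 1) * ∫ ω, (P (r + 1)).eval (X ω) ∂μ := by
    rw [← integral_const_mul]
    congr 1 with ω
    rw [ascPochhammer_succ_eval_eq_mul]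
    ring
  rw [integral_congr_ae hstep, integral_add (hrw.integrable_comp_walkPos (P _).continuous _)
    (hηP.const_mul _), integral_const_mul, hrw.integral_eta_succ_mul hPm hc, hcond]
  ring

lemma integral_ascPochhammer_walkPos [IsFiniteMeasure μ] (hp : 0 ≤ p) (r n : ℕ) :
    ∫ ω, (ascPochhammer ℝ (r + 1)).eval (walkPos η (n + 1) ω) ∂μ =
      (r + 1)! * s * aSeq ((r + 1 : ℕ) * p) (n + 1) := by
  have hrp : 0 ≤ ((r + 1 : ℕ) : ℝ) * p := by positivity
  induction n with
  | zero =>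
    have h : (fun ω => (ascPochhammer ℝ (r + 1)).eval (walkPos η 1 ω)) =ᵐ[μ]
        fun ω => ((r + 1)! : ℝ) * η 1 ω := by
      filter_upwards [hrw.vals 1 le_rfl] with ω hω
      rcases hω with h | h <;> simp [walkPos, h]
    rw [integral_congr_ae h, integral_const_mul, hrw.integral_eta_one, aSeq_one hrp, mul_one]
  | succ n ih =>
    rw [hrw.integral_ascPochhammer_walkPos_succ, ih, aSeq_succ (n := n + 1) hrp (by omega)]
    push_cast
    ring

lemma integral_walkPos_div_aSeq_pow_le [IsFiniteMeasure μ] (hp : 0 ≤ p) {r : ℕ} (hr : r ≠ 0)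
    (n : ℕ) : ∫ ω, (walkPos η (n + 1) ω / aSeq p (n + 1)) ^ r ∂μ ≤ r ! * s := by
  obtain ⟨r, rfl⟩ : ∃ k, r = k + 1 := ⟨r - 1, by omega⟩
  have ha := aSeq_pos hp n.succ_ne_zero
  have hX := hrw.ae_walkPos_mem_Icc (n + 1)
  calc ∫ ω, (walkPos η (n + 1) ω / aSeq p (n + 1)) ^ (r + 1) ∂μ
      = (∫ ω, walkPos η (n + 1) ω ^ (r + 1) ∂μ) / aSeq p (n + 1) ^ (r + 1) := by
        simp_rw [div_pow]; exact integral_div _ _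
    _ ≤ (∫ ω, (ascPochhammer ℝ (r + 1)).eval (walkPos η (n + 1) ω) ∂μ) /
          aSeq p (n + 1) ^ (r + 1) := by
        refine div_le_div_of_nonneg_right (integral_mono_ae
          (hrw.integrable_comp_walkPos (continuous_pow _) _)
          (hrw.integrable_comp_walkPos (ascPochhammer ℝ _).continuous _)
          (hX.mono fun ω hω => pow_le_ascPochhammer_eval _ hω.1)) (by positivity)
    _ ≤ (r + 1)! * s * aSeq p (n + 1) ^ (r + 1) / aSeq p (n + 1) ^ (r + 1) := by
        rw [hrw.integral_ascPochhammer_walkPos hp]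
        have := hrw.s_nonneg
        gcongr
        exact aSeq_mul_le_pow hp _ n.succ_ne_zero
    _ = (r + 1)! * s := by field_simp

lemma eLpNorm_walkPos_div_aSeq_le [IsFiniteMeasure μ] (hp : 0 ≤ p) {m : ℕ} (hm : m ≠ 0)
    (n : ℕ) :
    eLpNorm (fun ω => walkPos η (n + 1) ω / aSeq p (n + 1)) m μ ≤
      ENNReal.ofReal ((m ! * s) ^ (m : ℝ)⁻¹) := by
  have ha := aSeq_pos hp n.succ_ne_zero
  rw [(hrw.memLp_comp_walkPos (continuous_id'.div_const _) _ _).eLpNorm_eq_integral_rpow_norm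
    (by simpa using hm) (by simp), ENNReal.toReal_natCast]
  refine ENNReal.ofReal_le_ofReal (Real.rpow_le_rpow (integral_nonneg fun _ => by positivity) ?_
    (by positivity))
  calc ∫ ω, ‖walkPos η (n + 1) ω / aSeq p (n + 1)‖ ^ (m : ℝ) ∂μ
      = ∫ ω, (walkPos η (n + 1) ω / aSeq p (n + 1)) ^ m ∂μ := by
        refine integral_congr_ae ((hrw.ae_walkPos_mem_Icc (n + 1)).mono fun ω hω => ?_)
        simp only [Real.rpow_natCast, Real.norm_of_nonneg (div_nonneg hω.1 ha.le)]
    _ ≤ m ! * s := hrw.integral_walkPos_div_aSeq_pow_le hp hm n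

lemma martingale_walkMartingale [IsFiniteMeasure μ] (hp : 0 ≤ p) :
    Martingale (walkMartingale p s η) (walkFiltration η hrw.meas) μ := by
  set ℱ := walkFiltration η hrw.meas
  have hadapted : StronglyAdapted ℱ (walkMartingale p s η) := fun n =>
    (((measurable_walkPos_walkFiltration hrw.meas le_rfl).div_const _).sub_const
      s).stronglyMeasurable
  have hint : ∀ n, Integrable (walkMartingale p s η n) μ := fun n =>
    ((hrw.integrable_walkPos _).div_const _).sub (integrable_const s)
  refine martingale_nat hadapted hint fun n => ?_
  have hY : walkMartingale p s η (n + 1) =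
      (aSeq p (n + 2))⁻¹ • walkPos η (n + 2) - fun _ => s := by
    funext ω; simp [walkMartingale, div_eq_inv_mul]
  have ha := aSeq_pos hp n.succ_ne_zero
  rw [hY]
  filter_upwards [condExp_sub ((hrw.integrable_walkPos _).smul (aSeq p (n + 2))⁻¹)
      (integrable_const s) (ℱ n),
    condExp_smul (aSeq p (n + 2))⁻¹ (walkPos η (n + 2)) (ℱ n), hrw.condExp_walkPos_succ n]
    with ω h1 h2 h3
  rw [h1, Pi.sub_apply, h2, condExp_const (ℱ.le n), Pi.smul_apply, h3, walkMartingale,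
    aSeq_succ (n := n + 1) hp (by omega)]
  have hc : (1 + p / (n + 1) : ℝ) ≠ 0 := by positivity
  push_cast
  simp only [smul_eq_mul, zero_add, sub_zero]
  field_simp

lemma integral_walkMartingale [IsProbabilityMeasure μ] (hp : 0 ≤ p) (n : ℕ) :
    ∫ ω, walkMartingale p s η n ω ∂μ = 0 := by
  have h := hrw.integral_ascPochhammer_walkPos hp 0 n
  simp only [zero_add, ascPochhammer_one, Polynomial.eval_X, Nat.factorial_one, Nat.cast_one,
    one_mul] at h
  have ha := aSeq_pos hp n.succ_ne_zero
  simp only [walkMartingale]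
  rw [integral_sub ((hrw.integrable_walkPos _).div_const _) (integrable_const s), integral_div, h,
    integral_const]
  field_simp
  simp

lemma exists_eLpNorm_walkMartingale_le [IsProbabilityMeasure μ] (hp : 0 ≤ p) {m : ℕ}
    (hm : m ≠ 0) : ∃ R : ℝ≥0, ∀ n, eLpNorm (walkMartingale p s η n) m μ ≤ R := by
  refine ⟨((m ! * s) ^ (m : ℝ)⁻¹).toNNReal + s.toNNReal, fun n => ?_⟩
  have hsub : walkMartingale p s η n =
      (fun ω => walkPos η (n + 1) ω / aSeq p (n + 1)) - fun _ => s := rfl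
  calc eLpNorm (walkMartingale p s η n) m μ
      ≤ eLpNorm (fun ω => walkPos η (n + 1) ω / aSeq p (n + 1)) m μ +
          eLpNorm (fun _ => s) m μ :=
        hsub ▸ eLpNorm_sub_le ((measurable_walkPos hrw.meas _).div_const _).aestronglyMeasurable
          aestronglyMeasurable_const (by exact_mod_cast Nat.one_le_iff_ne_zero.mpr hm)
    _ ≤ ENNReal.ofReal ((m ! * s) ^ (m : ℝ)⁻¹) + ENNReal.ofReal s := by
        gcongr
        · exact hrw.eLpNorm_walkPos_div_aSeq_le hp hm n
        · simp [eLpNorm_const s (Nat.cast_ne_zero.mpr hm) (NeZero.ne μ),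
            Real.enorm_of_nonneg hrw.s_nonneg]
    _ = _ := by rw [ENNReal.coe_add]; rfl

end IsMinimalRW

end Walk

theorem minimalRW_q0_convergence_general {Ω : Type*} [MeasurableSpace Ω] (μ : Measure Ω)
    [IsProbabilityMeasure μ] (p s : ℝ) (hp0 : 1 / 2 < p)
    (η : ℕ → Ω → ℝ) (hrw : IsMinimalRW μ p 0 s η) :
    ∃ M : Ω → ℝ,
      (∀ᵐ ω ∂μ, Tendsto (fun n : ℕ => walkPos η n ω / aSeq p n - s) atTop (nhds (M ω))) ∧
      (∀ m : ℕ, 1 ≤ m →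
        Tendsto (fun n : ℕ => ∫ ω, |walkPos η n ω / aSeq p n - s - M ω| ^ (m : ℝ) ∂μ)
          atTop (nhds 0)) ∧
      ∫ ω, M ω ∂μ = 0 := by
  have hp : 0 ≤ p := by linarith
  set ℱ := walkFiltration η hrw.meas
  set Y := walkMartingale p s η
  set M := ℱ.limitProcess Y μ
  have hY : Martingale Y ℱ μ := hrw.martingale_walkMartingale hp
  have hYM : ∀ n, AEStronglyMeasurable (Y n - M) μ := fun n =>
    (((hY.stronglyMeasurable n).mono (ℱ.le n)).sub
      Filtration.stronglyMeasurable_limit_process').aestronglyMeasurable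
  have hLp : ∀ m : ℕ, 1 ≤ m → Tendsto (fun n => eLpNorm (Y n - M) m μ) atTop (𝓝 0) := by
    intro m hm
    obtain ⟨R, hR⟩ := hrw.exists_eLpNorm_walkMartingale_le hp (m := 2 * m) (by omega)
    exact hY.submartingale.tendsto_eLpNorm_sub_limitProcess (by exact_mod_cast hm) (by simp)
      (by exact_mod_cast hR)
  refine ⟨M, ?_, fun m hm => ?_, ?_⟩
  · obtain ⟨R, hR⟩ := hrw.exists_eLpNorm_walkMartingale_le hp one_ne_zero
    filter_upwards [hY.submartingale.ae_tendsto_limitProcess (by exact_mod_cast hR)] with ω hω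
    exact (tendsto_add_atTop_iff_nat 1).mp hω
  · refine (tendsto_add_atTop_iff_nat 1).mp ?_
    simpa [Y, walkMartingale, Real.norm_eq_abs] using
      tendsto_integral_norm_rpow_of_tendsto_eLpNorm (by simp; omega) (by simp) hYM (hLp m hm)
  · have hmean := tendsto_integral_of_L1' M
      Filtration.stronglyMeasurable_limit_process'.aestronglyMeasurable
      (Eventually.of_forall hY.integrable) (by exact_mod_cast hLp 1 le_rfl)
    have hY0 : ∀ n, ∫ ω, Y n ω ∂μ = 0 := hrw.integral_walkMartingale hp
    simp_rw [hY0] at hmean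
    exact tendsto_nhds_unique hmean tendsto_const_nhds

/-- For `q = 0` and `1/2 < p < 1`, `X_n / a_n - s` converges a.s. and in every `L^m`
to a random variable `M` with mean zero. -/
theorem minimalRW_q0_convergence {Ω : Type*} [MeasurableSpace Ω] (μ : Measure Ω)
    [IsProbabilityMeasure μ] (p s : ℝ) (hp0 : 1 / 2 < p) (hp1 : p < 1)
    (hs : s ∈ Set.Icc (0:ℝ) 1) (η : ℕ → Ω → ℝ) (hrw : IsMinimalRW μ p 0 s η) :
    ∃ M : Ω → ℝ,
      (∀ᵐ ω ∂μ, Tendsto (fun n : ℕ => walkPos η n ω / aSeq p n - s) atTop (nhds (M ω))) ∧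
      (∀ m : ℕ, 1 ≤ m →
        Tendsto (fun n : ℕ => ∫ ω, |walkPos η n ω / aSeq p n - s - M ω| ^ (m : ℝ) ∂μ)
          atTop (nhds 0)) ∧
      ∫ ω, M ω ∂μ = 0 :=
  minimalRW_q0_convergence_general μ p s hp0 η hrw
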